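/- arXiv:2403.02465 — 4 statements merged into one kernel-verified Lean document; each statement's English description precedes it below -/
import Mathlib

section
/- If Σ is a complete generalized fan, i.e., every vector of V lies in the cone generated by some face, then there exist strictly positive real numbers λ_s such that the sum over all s in S of λ_s · ρ(s) equals zero. -/
open Finset

/-- Adding `1` to every coefficient turns a nonnegative representation of `-∑ s, ρ s`
into a strictly positive relation. -/
theorem exists_pos_relation_of_neg_sum_eq {R S V : Type*} [Fintype S] [Ring R] [PartialOrder R]
    [IsStrictOrderedRing R] [AddCommGroup V] [Module R V] (ρ : S → V) (σ : Finset S)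
    (μ : S → R) (hμ : ∀ s ∈ σ, 0 ≤ μ s) (hneg : -∑ s, ρ s = ∑ s ∈ σ, μ s • ρ s) :
    ∃ lam : S → R, (∀ s, 0 < lam s) ∧ ∑ s, lam s • ρ s = 0 := by
  refine ⟨fun s => 1 + (σ : Set S).indicator μ s, fun s => ?_, ?_⟩
  · exact add_pos_of_pos_of_nonneg one_pos (Set.indicator_nonneg hμ s)
  · simp only [add_smul, one_smul, sum_add_distrib, ← Set.indicator_smul_apply_left]
    rw [sum_indicator_subset _ (subset_univ σ), ← hneg, add_neg_cancel]

theorem complete_fan_positive_relation_general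
    {S : Type*} [Fintype S] {V : Type*} [AddCommGroup V] [Module ℝ V]
    (K : Set (Finset S)) (ρ : S → V)
    (hcomplete : ∀ v : V, ∃ σ ∈ K, ∃ lam : S → ℝ,
      (∀ s, 0 ≤ lam s) ∧ v = ∑ s ∈ σ, lam s • ρ s) :
    ∃ lam : S → ℝ, (∀ s, 0 < lam s) ∧ ∑ s : S, lam s • ρ s = 0 := by
  obtain ⟨σ, -, μ, hμ, hneg⟩ := hcomplete (-∑ s, ρ s)
  exact exists_pos_relation_of_neg_sum_eq ρ σ μ (fun s _ => hμ s) hneg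

/-- For a complete generalized fan Σ = (S, K, V, ρ) (every vector of V lies in
the cone generated by some face σ ∈ K), there exist strictly positive reals λ_s with
∑_{s ∈ S} λ_s • ρ(s) = 0. -/
theorem complete_fan_positive_relation
    {S : Type*} [Fintype S] {V : Type*} [AddCommGroup V] [Module ℝ V]
    [FiniteDimensional ℝ V]
    (K : Set (Finset S)) (ρ : S → V)
    (hcomplete : ∀ v : V, ∃ σ ∈ K, ∃ lam : S → ℝ,
      (∀ s, 0 ≤ lam s) ∧ v = ∑ s ∈ σ, lam s • ρ s) :
    ∃ lam : S → ℝ, (∀ s, 0 < lam s) ∧ ∑ s : S, lam s • ρ s = 0 :=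
  complete_fan_positive_relation_general K ρ hcomplete
end

section
/- Let Σ = (S, K, V, ρ) be a complete generalized fan with no ghost vertices. Then any holomorphic automorphism φ of ℂ^S that normalizes the action of the complex fan torus G_Σ is a polynomial automorphism. -/
/-!
Completeness puts `-∑ ρ s` in some cone, which gives real weights `μ ≥ 1` with
`∑ μ s • ρ s = 0`. The torus element `z ↦ exp μ • z` is conjugated by `φ` into the torus, so
every coordinate `f` of `φ` satisfies `f (exp μ • z) = a * f z` for a constant `a`. Iterating
this relation moves any `z` into the unit ball at the cost of a factor `a ^ k`, so `f` has
polynomial growth. By the Cauchy estimates the restriction of `f` to each coordinate line is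
then a polynomial of uniformly bounded degree, and Lagrange interpolation in one coordinate at
a time assembles these into a polynomial in all variables.
-/

open Complex Polynomial Function

lemma Differentiable.iteratedDeriv_eq_zero_of_norm_le {f : ℂ → ℂ} (hf : Differentiable ℂ f)
    {C : ℝ} {N n : ℕ} (hb : ∀ u, ‖f u‖ ≤ C * max 1 ‖u‖ ^ N) (hn : N < n) :
    iteratedDeriv n f 0 = 0 := by
  have hC : 0 ≤ C := by simpa using (norm_nonneg _).trans (hb 0)
  have hR : ∀ R : ℝ, 1 ≤ R → ‖iteratedDeriv n f 0‖ ≤ n.factorial * C / R := by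
    intro R hR
    have hR0 : 0 < R := one_pos.trans_le hR
    have hsphere : ∀ u ∈ Metric.sphere (0 : ℂ) R, ‖f u‖ ≤ C * R ^ N := fun u hu => by
      simpa [mem_sphere_zero_iff_norm.1 hu, max_eq_right hR] using hb u
    calc ‖iteratedDeriv n f 0‖ ≤ n.factorial * (C * R ^ N) / R ^ n :=
          norm_iteratedDeriv_le_of_forall_mem_sphere_norm_le n hR0 hf.diffContOnCl hsphere
      _ ≤ n.factorial * C / R := by
          rw [div_le_div_iff₀ (by positivity) hR0]
          calc n.factorial * (C * R ^ N) * R = n.factorial * C * R ^ (N + 1) := by ring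
            _ ≤ n.factorial * C * R ^ n :=
              mul_le_mul_of_nonneg_left (pow_le_pow_right₀ hR hn) (by positivity)
  exact norm_le_zero_iff.1 <| ge_of_tendsto
    ((tendsto_const_nhds (x := (n.factorial * C : ℝ))).div_atTop Filter.tendsto_id)
    (Filter.eventually_atTop.2 ⟨1, hR⟩)

lemma Differentiable.exists_polynomial_of_norm_le {f : ℂ → ℂ} (hf : Differentiable ℂ f)
    {C : ℝ} {N : ℕ} (hb : ∀ u, ‖f u‖ ≤ C * max 1 ‖u‖ ^ N) :
    ∃ q ∈ degreeLT ℂ (N + 1), ∀ u, f u = q.eval u := by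
  refine ⟨∑ n ∈ Finset.range (N + 1),
      Polynomial.C ((n.factorial : ℂ)⁻¹ * iteratedDeriv n f 0) * X ^ n,
    Submodule.sum_mem _ fun n hn => mem_degreeLT.2 ((degree_C_mul_X_pow_le n _).trans_lt ?_),
    fun u => ?_⟩
  · exact_mod_cast Finset.mem_range.1 hn
  rw [← taylorSeries_eq_of_entire' 0 u hf,
    tsum_eq_sum (s := Finset.range (N + 1)) fun n hn => ?_]
  · simp [eval_finsetSum]
  · rw [hf.iteratedDeriv_eq_zero_of_norm_le hb (by simpa using hn)]
    simp

section Interpolation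

variable {K S : Type*} [Field K] [DecidableEq S] {N : ℕ}

def IsPolynomialAlongLines (N : ℕ) (f : (S → K) → K) : Prop :=
  ∀ s z, ∃ q ∈ degreeLT K (N + 1), ∀ u, f (update z s u) = q.eval u

lemma eval_eq_sum_lagrangeBasis (v : Fin (N + 1) ↪ K) {q : K[X]} (hq : q ∈ degreeLT K (N + 1))
    (x : K) : q.eval x = ∑ j, (Lagrange.basis Finset.univ v j).eval x * q.eval (v j) := by
  conv_lhs => rw [Lagrange.eq_interpolate (f := q) v.injective.injOn (s := Finset.univ)
    (by simpa using mem_degreeLT.1 hq)]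
  simp [Lagrange.interpolate_apply, eval_finsetSum, mul_comm]

lemma exists_mvPolynomial_of_update (v : Fin (N + 1) ↪ K) {f : (S → K) → K} (a : S)
    (hf : ∀ z, ∃ q ∈ degreeLT K (N + 1), ∀ u, f (update z a u) = q.eval u)
    (hp : ∀ j, ∃ p : MvPolynomial S K, ∀ z, f (update z a (v j)) = MvPolynomial.eval z p) :
    ∃ p : MvPolynomial S K, ∀ z, f z = MvPolynomial.eval z p := by
  choose p hp using hp
  refine ⟨∑ j, (Lagrange.basis Finset.univ v j).toMvPolynomial a * p j, fun z => ?_⟩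
  obtain ⟨q, hq, hfq⟩ := hf z
  have hfz : f z = q.eval (z a) := by rw [← hfq, update_eq_self]
  simp only [map_sum, map_mul, MvPolynomial.eval_toMvPolynomial, ← hp, hfq, hfz]
  exact eval_eq_sum_lagrangeBasis v hq (z a)

lemma IsPolynomialAlongLines.comp_update {f : (S → K) → K} (hf : IsPolynomialAlongLines N f)
    (a : S) (x : K) : IsPolynomialAlongLines N fun z => f (update z a x) := by
  intro s z
  rcases eq_or_ne s a with rfl | hsa
  · refine ⟨Polynomial.C (f (update z s x)), mem_degreeLT.2 (degree_C_le.trans_lt ?_), by simp⟩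
    exact_mod_cast WithBot.coe_lt_coe.2 (Nat.succ_pos N)
  · obtain ⟨q, hq, hfq⟩ := hf s (update z a x)
    exact ⟨q, hq, fun u => by simpa only [update_comm hsa] using hfq u⟩

lemma IsPolynomialAlongLines.exists_mvPolynomial_of_dependsOn (v : Fin (N + 1) ↪ K)
    {f : (S → K) → K} (hf : IsPolynomialAlongLines N f) (T : Finset S)
    (hT : ∀ z z', (∀ t ∈ T, z t = z' t) → f z = f z') :
    ∃ p : MvPolynomial S K, ∀ z, f z = MvPolynomial.eval z p := by
  induction T using Finset.induction_on generalizing f with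
  | empty => exact ⟨MvPolynomial.C (f 0), fun z => by simpa using hT z 0 (by simp)⟩
  | insert a T _ ih =>
    refine exists_mvPolynomial_of_update v a (hf a) fun j => ih (hf.comp_update a (v j)) ?_
    intro z z' h
    refine hT _ _ fun t ht => ?_
    rcases eq_or_ne t a with rfl | hta
    · simp
    · simp [update_of_ne hta, h t ((Finset.mem_insert.1 ht).resolve_left hta)]

theorem IsPolynomialAlongLines.exists_mvPolynomial [Fintype S] [Infinite K] {f : (S → K) → K}
    (hf : IsPolynomialAlongLines N f) :
    ∃ p : MvPolynomial S K, ∀ z, f z = MvPolynomial.eval z p :=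
  hf.exists_mvPolynomial_of_dependsOn (Fin.valEmbedding.trans (Infinite.natEmbedding K))
    Finset.univ fun _ _ h => congrArg f (funext fun t => h t (Finset.mem_univ t))

end Interpolation

lemma map_pow_mul_eq_pow_mul {S M N : Type*} [Monoid M] [Monoid N] {f : (S → M) → N}
    {c : S → M} {a : N} (h : ∀ y, f (fun s => c s * y s) = a * f y) (k : ℕ) (y : S → M) :
    f (fun s => c s ^ k * y s) = a ^ k * f y := by
  induction k with
  | zero => simp
  | succ k ih =>
    calc f (fun s => c s ^ (k + 1) * y s) = f (fun s => c s * (c s ^ k * y s)) := by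
          simp only [pow_succ', mul_assoc]
      _ = a ^ (k + 1) * f y := by rw [h, ih, pow_succ', mul_assoc]

section Growth

variable {S : Type*} [Fintype S]

lemma exists_norm_le_of_map_mul_eq_mul {f : (S → ℂ) → ℂ} (hf : Continuous f) {c : S → ℂ}
    {r : ℝ} (hr : 1 < r) (hc : ∀ s, r ≤ ‖c s‖) {a : ℂ}
    (h : ∀ y, f (fun s => c s * y s) = a * f y) :
    ∃ (C : ℝ) (N : ℕ), ∀ z, ‖f z‖ ≤ C * max 1 ‖z‖ ^ N := by
  obtain ⟨M, hM⟩ := (isCompact_closedBall (0 : S → ℂ) 1).exists_bound_of_continuousOn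
    hf.continuousOn
  have hM0 : 0 ≤ M := (norm_nonneg _).trans (hM 0 (by simp))
  obtain ⟨N, hN⟩ := pow_unbounded_of_one_lt ‖a‖ hr
  have hr0 : 0 < r := one_pos.trans hr
  refine ⟨M * r ^ N, N, fun z => ?_⟩
  set R := max 1 ‖z‖
  obtain ⟨k, hkR, hRk⟩ := exists_nat_pow_near (le_max_left 1 ‖z‖) hr
  have hc0 : ∀ s, c s ≠ 0 := fun s => norm_pos_iff.1 (hr0.trans_le (hc s))
  set y : S → ℂ := fun s => (c s ^ (k + 1))⁻¹ * z s
  have hzy : z = fun s => c s ^ (k + 1) * y s := by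
    ext s; simp [y, mul_inv_cancel_left₀ (pow_ne_zero _ (hc0 s))]
  have hy : y ∈ Metric.closedBall 0 1 := by
    rw [mem_closedBall_zero_iff, pi_norm_le_iff_of_nonneg zero_le_one]
    intro s
    rw [norm_mul, norm_inv, norm_pow,
      inv_mul_le_iff₀ (pow_pos (hr0.trans_le (hc s)) _), mul_one]
    calc ‖z s‖ ≤ R := (norm_le_pi_norm z s).trans (le_max_right _ _)
      _ ≤ r ^ (k + 1) := hRk.le
      _ ≤ ‖c s‖ ^ (k + 1) := by gcongr; exact hc s
  calc ‖f z‖ = ‖a‖ ^ (k + 1) * ‖f y‖ := by rw [hzy, map_pow_mul_eq_pow_mul h, norm_mul, norm_pow]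
    _ ≤ (r ^ N) ^ (k + 1) * M := by gcongr; exact hM y hy
    _ = M * r ^ N * (r ^ k) ^ N := by ring
    _ ≤ M * r ^ N * R ^ N := by gcongr

lemma max_one_norm_update_le {E : Type*} [SeminormedAddCommGroup E] [DecidableEq S] (z : S → E)
    (s : S) (u : E) :
    max 1 ‖update z s u‖ ≤ max 1 ‖z‖ * max 1 ‖u‖ := by
  have hz := le_max_right 1 ‖z‖
  have hu := le_max_right 1 ‖u‖
  have hz1 := le_max_left 1 ‖z‖
  have hu1 := le_max_left 1 ‖u‖
  refine max_le (by nlinarith) ((pi_norm_le_iff_of_nonneg (by positivity)).2 fun t => ?_)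
  rcases eq_or_ne t s with rfl | hts
  · simp only [update_self]; nlinarith
  · rw [update_of_ne hts]; nlinarith [norm_le_pi_norm z t]

theorem Differentiable.exists_mvPolynomial_of_norm_le {f : (S → ℂ) → ℂ}
    (hf : Differentiable ℂ f) {C : ℝ} {N : ℕ} (hb : ∀ z, ‖f z‖ ≤ C * max 1 ‖z‖ ^ N) :
    ∃ p : MvPolynomial S ℂ, ∀ z, f z = MvPolynomial.eval z p := by
  classical
  have hC : 0 ≤ C := by simpa using (norm_nonneg _).trans (hb 0)
  refine IsPolynomialAlongLines.exists_mvPolynomial (N := N) fun s z => ?_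
  have hline : Differentiable ℂ fun u => f (update z s u) :=
    hf.comp fun u => (hasFDerivAt_update z u).differentiableAt
  refine hline.exists_polynomial_of_norm_le (C := C * max 1 ‖z‖ ^ N) fun u => ?_
  calc ‖f (update z s u)‖ ≤ C * max 1 ‖update z s u‖ ^ N := hb _
    _ ≤ C * (max 1 ‖z‖ * max 1 ‖u‖) ^ N := by gcongr; exact max_one_norm_update_le z s u
    _ = C * max 1 ‖z‖ ^ N * max 1 ‖u‖ ^ N := by ring

end Growth

lemma exists_one_le_sum_smul_eq_zero {S V : Type*} [Fintype S] [AddCommGroup V] [Module ℝ V]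
    {ρ : S → V} {σ : Finset S} {lam : S → ℝ} (hlam : ∀ s, 0 ≤ lam s)
    (h : -∑ s, ρ s = ∑ s ∈ σ, lam s • ρ s) :
    ∃ μ : S → ℝ, (∀ s, 1 ≤ μ s) ∧ ∑ s, μ s • ρ s = 0 := by
  classical
  refine ⟨fun s => 1 + if s ∈ σ then lam s else 0, fun s => ?_, ?_⟩
  · by_cases hs : s ∈ σ <;> simp [hs, hlam s]
  · simp only [add_smul, one_smul, Finset.sum_add_distrib, ite_smul, zero_smul,
      Finset.sum_ite_mem, Finset.univ_inter, ← h, add_neg_cancel]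

def fanTorus {S ι : Type*} [Fintype S] (ρ : S → ι → ℝ) : Set ((S → ℂ) → S → ℂ) :=
  {g | ∃ w : S → ℂ, (∀ i, ∑ s, w s * (ρ s i : ℂ) = 0) ∧ g = fun z s => Complex.exp (w s) * z s}

lemma exists_map_exp_mul_eq_exp_mul {S ι : Type*} [Fintype S] {ρ : S → ι → ℝ}
    {φ ψ : (S → ℂ) → (S → ℂ)} (hinv : ∀ z, ψ (φ z) = z)
    (hnorm : Set.MapsTo (fun g => φ ∘ g ∘ ψ) (fanTorus ρ) (fanTorus ρ)) {w : S → ℂ}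
    (hw : ∀ i, ∑ s, w s * (ρ s i : ℂ) = 0) :
    ∃ w' : S → ℂ, ∀ y, φ (fun s => exp (w s) * y s) = fun s => exp (w' s) * φ y s := by
  obtain ⟨w', -, hw'⟩ := hnorm ⟨w, hw, rfl⟩
  exact ⟨w', fun y => by simpa [hinv] using congrFun hw' (φ y)⟩

theorem normalizer_of_fan_torus_is_polynomial_general
    {S : Type*} [Fintype S] {ι : Type*}
    (K : Set (Finset S)) (ρ : S → ι → ℝ)
    (hcomplete : ∀ v : ι → ℝ, ∃ σ ∈ K, ∃ lam : S → ℝ,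
      (∀ s, 0 ≤ lam s) ∧ v = ∑ s ∈ σ, lam s • ρ s)
    (φ ψ : (S → ℂ) → (S → ℂ))
    (hφ : Differentiable ℂ φ)
    (hinv₁ : ∀ z, ψ (φ z) = z)
    (hnorm : (fun g : (S → ℂ) → (S → ℂ) => φ ∘ g ∘ ψ) ''
        {g | ∃ w : S → ℂ, (∀ i, ∑ s, w s * (ρ s i : ℂ) = 0) ∧
          g = fun z s => Complex.exp (w s) * z s}
      = {g | ∃ w : S → ℂ, (∀ i, ∑ s, w s * (ρ s i : ℂ) = 0) ∧
          g = fun z s => Complex.exp (w s) * z s}) :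
    ∀ s : S, ∃ p : MvPolynomial S ℂ, ∀ z, φ z s = MvPolynomial.eval z p := by
  intro s
  obtain ⟨σ, -, lam, hlam, hσ⟩ := hcomplete (-∑ t, ρ t)
  obtain ⟨μ, hμ1, hμ⟩ := exists_one_le_sum_smul_eq_zero hlam hσ
  have hμker : ∀ i, ∑ t, (μ t : ℂ) * (ρ t i : ℂ) = 0 := fun i => by
    exact_mod_cast by simpa using congrFun hμ i
  obtain ⟨w', hw'⟩ :=
    exists_map_exp_mul_eq_exp_mul hinv₁ (fun g hg => hnorm.le ⟨g, hg, rfl⟩) hμker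
  have hφs : Differentiable ℂ fun z => φ z s := differentiable_pi.1 hφ s
  obtain ⟨C, N, hC⟩ := exists_norm_le_of_map_mul_eq_mul hφs.continuous
    (c := fun t => exp (μ t)) (Real.one_lt_exp_iff.2 one_pos)
    (fun t => by simpa [Complex.norm_exp] using hμ1 t) fun y => congrFun (hw' y) s
  exact hφs.exists_mvPolynomial_of_norm_le hC

/-- Let Σ = (S, K, V, ρ) be a complete generalized fan with no ghost
vertices. Any holomorphic automorphism φ of ℂ^S normalizing the action of the complex fan
torus G_Σ = exp_ℂ(ker A_Σ^ℂ) (acting diagonally on ℂ^S) is a polynomial automorphism,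
i.e. each coordinate of φ is given by a polynomial. -/
theorem normalizer_of_fan_torus_is_polynomial
    {S : Type*} [Fintype S] {ι : Type*} [Fintype ι]
    (K : Set (Finset S)) (ρ : S → ι → ℝ)
    (hnoghost : ∀ s : S, ({s} : Finset S) ∈ K)
    (hcomplete : ∀ v : ι → ℝ, ∃ σ ∈ K, ∃ lam : S → ℝ,
      (∀ s, 0 ≤ lam s) ∧ v = ∑ s ∈ σ, lam s • ρ s)
    (φ ψ : (S → ℂ) → (S → ℂ))
    (hφ : Differentiable ℂ φ) (hψ : Differentiable ℂ ψ)
    (hinv₁ : ∀ z, ψ (φ z) = z) (hinv₂ : ∀ z, φ (ψ z) = z)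
    (hnorm : (fun g : (S → ℂ) → (S → ℂ) => φ ∘ g ∘ ψ) ''
        {g | ∃ w : S → ℂ, (∀ i, ∑ s, w s * (ρ s i : ℂ) = 0) ∧
          g = fun z s => Complex.exp (w s) * z s}
      = {g | ∃ w : S → ℂ, (∀ i, ∑ s, w s * (ρ s i : ℂ) = 0) ∧
          g = fun z s => Complex.exp (w s) * z s}) :
    ∀ s : S, ∃ p : MvPolynomial S ℂ, ∀ z, φ z s = MvPolynomial.eval z p :=
  normalizer_of_fan_torus_is_polynomial_general K ρ hcomplete φ ψ hφ hinv₁ hnorm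
end

section
/- Let Σ = (S, K, V, ρ) be a generalized fan and m a geometric Demazure root attached to s ∈ S. Then the one-parameter transformation y_m(λ) of ℂ^S preserves the Cox construction U(Σ) for all λ ∈ ℂ. Conversely, if m is a Demazure root that is not geometric, then some y_m(λ) maps a point of U(Σ) outside of U(Σ). -/
/-!
If the monomial `∏_{s' ≠ s₀} z_{s'}^{a s'}` vanishes at `z`, then `y_m(λ)` fixes `z`. Otherwise every
zero coordinate of `z` other than `s₀` lies in `σ_m`, and a face `τ ⊇ σ_m ∪ {s₀}` shows that
`y_m(λ) z ∈ U(Σ)`, since `y_m(λ)` only moves the `s₀`-coordinate.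

Conversely, the point with zeros exactly on `σ_m ∖ {s₀}` and ones elsewhere lies in `U(Σ,σ)`, the
monomial equals `1` there, and `y_m(-1)` kills its `s₀`-coordinate: a face witnessing that the
image lies in `U(Σ)` must contain `s₀` and `σ_m`.
-/

/-- The Cox construction U(Σ) = ⋃_{σ ∈ K} {z ∈ ℂ^S : z_s ≠ 0 for s ∉ σ}. -/
def coxU {S : Type*} (K : Set (Finset S)) : Set (S → ℂ) :=
  {z | ∃ σ ∈ K, ∀ s ∉ σ, z s ≠ 0}

/-- The one-parameter transformation y_m(λ) of ℂ^S attached to a Demazure root m with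
distinguished vertex s₀ and exponents a s' = ⟨−m, ρ(s')⟩ ∈ ℕ for s' ≠ s₀. -/
def ym {S : Type*} [Fintype S] [DecidableEq S] (s₀ : S) (a : S → ℕ) (lam : ℂ)
    (z : S → ℂ) : S → ℂ :=
  Function.update z s₀ (z s₀ + lam * ∏ s' ∈ Finset.univ.erase s₀, z s' ^ a s')

section

variable {S : Type*}

/-- Since `a s' = -⟨m, ρ(s')⟩` for `s' ≠ s₀`, the elements `s' ∈ σ` with `s' ≠ s₀` and `a s' = 0`
are those of `σ_m ∖ {s₀}`. -/
def IsGeometric (K : Set (Finset S)) (s₀ : S) (a : S → ℕ) : Prop :=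
  ∀ σ ∈ K, ∃ τ ∈ K, s₀ ∈ τ ∧ ∀ s' ∈ σ, s' ≠ s₀ → a s' = 0 → s' ∈ τ

variable [Fintype S] [DecidableEq S]

theorem ym_apply_of_ne {s₀ s : S} (hs : s ≠ s₀) (a : S → ℕ) (lam : ℂ) (z : S → ℂ) :
    ym s₀ a lam z s = z s :=
  Function.update_of_ne hs _ _

theorem ym_apply_self (s₀ : S) (a : S → ℕ) (lam : ℂ) (z : S → ℂ) :
    ym s₀ a lam z s₀ = z s₀ + lam * ∏ s' ∈ Finset.univ.erase s₀, z s' ^ a s' :=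
  Function.update_self _ _ _

theorem ym_eq_self_of_apply_eq_zero {s₀ s : S} {a : S → ℕ} {z : S → ℂ} (hs : s ≠ s₀)
    (hzs : z s = 0) (has : a s ≠ 0) (lam : ℂ) : ym s₀ a lam z = z := by
  have hmonomial : ∏ s' ∈ Finset.univ.erase s₀, z s' ^ a s' = 0 :=
    Finset.prod_eq_zero (Finset.mem_erase.mpr ⟨hs, Finset.mem_univ s⟩) (by simp [hzs, has])
  simp [ym, hmonomial]

theorem IsGeometric.ym_mem_coxU {K : Set (Finset S)} {s₀ : S} {a : S → ℕ}
    (hgeom : IsGeometric K s₀ a) (lam : ℂ) {z : S → ℂ} (hz : z ∈ coxU K) :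
    ym s₀ a lam z ∈ coxU K := by
  by_cases hfixed : ∃ s, s ≠ s₀ ∧ z s = 0 ∧ a s ≠ 0
  · obtain ⟨s, hs, hzs, has⟩ := hfixed
    rwa [ym_eq_self_of_apply_eq_zero hs hzs has]
  push Not at hfixed
  obtain ⟨σ, hσ, hzσ⟩ := hz
  obtain ⟨τ, hτ, hs₀τ, hστ⟩ := hgeom σ hσ
  refine ⟨τ, hτ, fun s hsτ hzs => ?_⟩
  have hs : s ≠ s₀ := by rintro rfl; exact hsτ hs₀τ
  rw [ym_apply_of_ne hs] at hzs
  have hsσ : s ∈ σ := by_contra fun hsσ => hzσ s hsσ hzs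
  exact hsτ (hστ s hsσ hs (hfixed s hs hzs))

theorem isGeometric_of_forall_ym_mem_coxU {K : Set (Finset S)} {s₀ : S} {a : S → ℕ}
    (hpres : ∀ (lam : ℂ) (z : S → ℂ), z ∈ coxU K → ym s₀ a lam z ∈ coxU K) :
    IsGeometric K s₀ a := by
  intro σ hσ
  let z : S → ℂ := fun s => if s ∈ σ ∧ s ≠ s₀ ∧ a s = 0 then 0 else 1
  have hz : z ∈ coxU K := ⟨σ, hσ, fun s hs => by simp [z, hs]⟩
  have hmonomial : ∏ s' ∈ Finset.univ.erase s₀, z s' ^ a s' = 1 :=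
    Finset.prod_eq_one fun s _ => by by_cases h : s ∈ σ ∧ s ≠ s₀ ∧ a s = 0 <;> simp [z, h]
  obtain ⟨τ, hτ, hzτ⟩ := hpres (-1) z hz
  refine ⟨τ, hτ, by_contra fun hs₀τ => hzτ s₀ hs₀τ ?_, fun s hsσ hs has => ?_⟩
  · rw [ym_apply_self, hmonomial]
    simp [z]
  · exact by_contra fun hsτ => hzτ s hsτ (by simp [ym_apply_of_ne hs, z, hsσ, hs, has])

end

theorem ym_preserves_cox_iff_geometric_general
    {S : Type*} [Fintype S] [DecidableEq S]
    (K : Set (Finset S)) (s₀ : S) (a : S → ℕ) :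
    (∀ σ ∈ K, ∃ τ ∈ K, s₀ ∈ τ ∧ ∀ s' ∈ σ, s' ≠ s₀ → a s' = 0 → s' ∈ τ) ↔
      (∀ (lam : ℂ) (z : S → ℂ), z ∈ coxU K → ym s₀ a lam z ∈ coxU K) :=
  ⟨fun hgeom lam _ hz => IsGeometric.ym_mem_coxU hgeom lam hz, isGeometric_of_forall_ym_mem_coxU⟩

/-- For a Demazure root m of Σ = (S, K, V, ρ) attached to s₀
(⟨m, ρ(s₀)⟩ = 1, ⟨m, ρ(s')⟩ = −(a s') ≤ 0 for s' ≠ s₀), the transformations y_m(λ) all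
preserve the Cox construction U(Σ) if and only if m is geometric, i.e. for every face
σ ∈ K there is a face τ ∈ K containing s₀ and σ_m = {s' ∈ σ : ⟨m, ρ(s')⟩ = 0}. -/
theorem ym_preserves_cox_iff_geometric
    {S : Type*} [Fintype S] [DecidableEq S] {ι : Type*} [Fintype ι]
    (K : Set (Finset S)) (ρ : S → ι → ℝ) (m : ι → ℝ) (s₀ : S) (a : S → ℕ)
    (hm1 : ∑ i, m i * ρ s₀ i = 1)
    (ha : ∀ s', s' ≠ s₀ → (a s' : ℝ) = -∑ i, m i * ρ s' i) :
    (∀ σ ∈ K, ∃ τ ∈ K, s₀ ∈ τ ∧ ∀ s' ∈ σ, s' ≠ s₀ → a s' = 0 → s' ∈ τ) ↔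
      (∀ (lam : ℂ) (z : S → ℂ), z ∈ coxU K → ym s₀ a lam z ∈ coxU K) :=
  ym_preserves_cox_iff_geometric_general K s₀ a
end

section
/- Let Σ be a complete generalized fan associated to an embedded complete simplicial fan in V, and let A : V → W be any linear operator. Then the pushforward generalized fan A_*Σ is strongly complete. -/
/-- The cone of a face σ of a generalized fan: non-negative combinations of the ρ(s), s ∈ σ. -/
def fanCone {S : Type*} [Fintype S] {V : Type*} [AddCommGroup V] [Module ℝ V]
    (ρ : S → V) (σ : Finset S) : Set V :=
  {v | ∃ lam : S → ℝ, (∀ s, 0 ≤ lam s) ∧ v = ∑ s ∈ σ, lam s • ρ s}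

/-!
Let `σ₀ ⊆ σ` consist of the generators on which `m ∘ A` vanishes and put `x = ∑_{σ₀} ρ`.
Finitely many cones cover the points `x + t • ρ s`, so one cone `τ` contains them for
arbitrarily small `t > 0`; a simplicial cone is closed along a line, hence contains `x`.
Since the cones of `τ` and `σ₀` meet in the cone of `τ ∩ σ₀` and `x` has all coordinates
positive on `σ₀`, we get `σ₀ ⊆ τ`. Finally `m (A (x + t • ρ s)) = t * m (A (ρ s)) > 0` forces a
generator of `τ` on which `m ∘ A` is positive, and the only such generator is `s`.
-/

open Filter Topology

section

variable {S V : Type*} [AddCommGroup V] [Module ℝ V] (ρ : S → V)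

def fanCombination (σ : Finset S) : (S → ℝ) →ₗ[ℝ] V :=
  ∑ s ∈ σ, (LinearMap.proj s).smulRight (ρ s)

variable {ρ}

@[simp]
theorem fanCombination_apply (σ : Finset S) (c : S → ℝ) :
    fanCombination ρ σ c = ∑ s ∈ σ, c s • ρ s := by
  simp [fanCombination]

theorem LinearIndepOn.eqOn_of_fanCombination_eq {σ : Finset S} {c d : S → ℝ}
    (hli : LinearIndepOn ℝ ρ (σ : Set S)) (h : fanCombination ρ σ c = fanCombination ρ σ d) :
    Set.EqOn c d σ := fun s hs =>
  sub_eq_zero.1 <| linearIndepOn_iff'.1 hli σ (c - d) subset_rfl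
    (by simpa [sub_smul, sub_eq_zero] using h) s hs

variable [Fintype S]

theorem mem_fanCone_iff {σ : Finset S} {v : V} :
    v ∈ fanCone ρ σ ↔ ∃ c : S → ℝ, (∀ s ∈ σ, 0 ≤ c s) ∧ fanCombination ρ σ c = v := by
  refine ⟨fun ⟨c, hc, hv⟩ => ⟨c, fun s _ => hc s, by simp [hv]⟩, fun ⟨c, hc, hv⟩ => ?_⟩
  refine ⟨fun s => max (c s) 0, fun s => le_max_right _ _, ?_⟩
  rw [← hv, fanCombination_apply]
  exact Finset.sum_congr rfl fun s hs => by simp only [max_eq_left (hc s hs)]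

theorem sum_mem_fanCone (σ : Finset S) : ∑ s ∈ σ, ρ s ∈ fanCone ρ σ :=
  ⟨1, fun _ => zero_le_one, by simp⟩

theorem exists_pos_of_mem_fanCone {σ : Finset S} {v : V} (φ : V →ₗ[ℝ] ℝ)
    (hv : v ∈ fanCone ρ σ) (hφ : 0 < φ v) : ∃ s ∈ σ, 0 < φ (ρ s) := by
  obtain ⟨c, hc, rfl⟩ := hv
  by_contra! h
  refine hφ.not_ge ?_
  simpa using Finset.sum_nonpos fun s hs => mul_nonpos_of_nonneg_of_nonpos (hc s) (h s hs)

theorem LinearIndepOn.subset_of_sum_mem_fanCone_inter [DecidableEq S] {σ τ : Finset S}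
    (hli : LinearIndepOn ℝ ρ (σ : Set S)) (h : ∑ s ∈ σ, ρ s ∈ fanCone ρ (τ ∩ σ)) : σ ⊆ τ := by
  obtain ⟨c, -, hc⟩ := h
  have hcomb : fanCombination ρ σ 1 = fanCombination ρ σ (fun s => if s ∈ τ then c s else 0) := by
    simp [hc, ite_smul, Finset.inter_comm]
  intro s hs
  by_contra hsτ
  simpa [hsτ] using hli.eqOn_of_fanCombination_eq hcomb hs

theorem LinearIndepOn.mem_fanCone_of_frequently {τ : Finset S} {x v : V}
    (hli : LinearIndepOn ℝ ρ (τ : Set S))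
    (h : ∃ᶠ t in 𝓝[>] (0 : ℝ), x + t • v ∈ fanCone ρ τ) : x ∈ fanCone ρ τ := by
  simp only [mem_fanCone_iff] at h ⊢
  obtain ⟨t₁, ⟨c₁, -, hc₁⟩, ht₁⟩ := (h.and_eventually self_mem_nhdsWithin).exists
  obtain ⟨t₂, ⟨c₂, -, hc₂⟩, ht₂⟩ := (h.and_eventually (Ioo_mem_nhdsGT ht₁)).exists
  set b : S → ℝ := (t₁ - t₂)⁻¹ • (c₁ - c₂)
  set a : S → ℝ := c₁ - t₁ • b
  have hb : fanCombination ρ τ b = v := by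
    rw [map_smul, map_sub, hc₁, hc₂, add_sub_add_left_eq_sub, ← sub_smul, smul_smul,
      inv_mul_cancel₀ (sub_ne_zero.2 ht₂.2.ne'), one_smul]
  have ha : fanCombination ρ τ a = x := by
    rw [map_sub, map_smul, hb, hc₁, add_sub_cancel_right]
  have hfreq : ∀ s ∈ τ, ∃ᶠ t in 𝓝[>] (0 : ℝ), a s + t * b s ∈ Set.Ici 0 := by
    intro s hs
    refine h.mono fun t ⟨c, hc, hct⟩ => ?_
    have : fanCombination ρ τ c = fanCombination ρ τ (a + t • b) := by
      rw [hct, map_add, map_smul, ha, hb]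
    simpa [hli.eqOn_of_fanCombination_eq this hs] using hc s hs
  refine ⟨a, fun s hs => isClosed_Ici.mem_of_frequently_of_tendsto (hfreq s hs) ?_, ha⟩
  have hcont : Continuous fun t : ℝ => a s + t * b s := by fun_prop
  exact tendsto_nhdsWithin_of_tendsto_nhds (hcont.tendsto' 0 _ (by simp))

end

theorem pushforward_of_embedded_complete_is_strongly_complete_general
    {S : Type*} [Fintype S] [DecidableEq S]
    {V W : Type*} [AddCommGroup V] [Module ℝ V]
    [AddCommGroup W] [Module ℝ W]
    (K : Set (Finset S)) (ρ : S → V)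
    (hdown : ∀ σ ∈ K, ∀ τ, τ ⊆ σ → τ ∈ K)
    (hsimplicial : ∀ σ ∈ K, LinearIndependent ℝ (fun s : {x // x ∈ σ} => ρ s))
    (hfaces : ∀ σ ∈ K, ∀ τ ∈ K, fanCone ρ σ ∩ fanCone ρ τ = fanCone ρ (σ ∩ τ))
    (hcomplete : ∀ v : V, ∃ σ ∈ K, v ∈ fanCone ρ σ)
    (A : V →ₗ[ℝ] W) :
    ∀ (m : Module.Dual ℝ W) (s : S), 0 < m (A (ρ s)) →
      (∀ s', 0 < m (A (ρ s')) → s' = s) →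
      ∀ σ ∈ K, s ∉ σ → ∃ τ ∈ K, s ∈ τ ∧ ∀ s' ∈ σ, m (A (ρ s')) = 0 → s' ∈ τ := by
  intro m s hs huniq σ hσK _
  set σ₀ := σ.filter fun s' => m (A (ρ s')) = 0
  set x := ∑ s' ∈ σ₀, ρ s'
  have hσ₀K : σ₀ ∈ K := hdown σ hσK σ₀ (Finset.filter_subset _ _)
  have hx : m (A x) = 0 := by
    simp only [x, map_sum]
    exact Finset.sum_eq_zero fun s' hs' => (Finset.mem_filter.1 hs').2
  obtain ⟨τ, hτ⟩ : ∃ τ, ∃ᶠ t in 𝓝[>] (0 : ℝ), τ ∈ K ∧ x + t • ρ s ∈ fanCone ρ τ :=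
    frequently_exists.1 (Frequently.of_forall fun t => hcomplete (x + t • ρ s))
  obtain ⟨t, ⟨hτK, hyτ⟩, ht⟩ := (hτ.and_eventually self_mem_nhdsWithin).exists
  have hxτ : x ∈ fanCone ρ τ :=
    LinearIndepOn.mem_fanCone_of_frequently (hsimplicial τ hτK) (hτ.mono fun _ => And.right)
  have hσ₀τ : σ₀ ⊆ τ := LinearIndepOn.subset_of_sum_mem_fanCone_inter (hsimplicial σ₀ hσ₀K)
    (hfaces τ hτK σ₀ hσ₀K ▸ ⟨hxτ, sum_mem_fanCone σ₀⟩)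
  obtain ⟨s', hs'τ, hs'⟩ :=
    exists_pos_of_mem_fanCone (m ∘ₗ A) hyτ (by simpa [hx] using mul_pos ht hs)
  exact ⟨τ, hτK, huniq s' hs' ▸ hs'τ, fun s' hs' h0 => hσ₀τ (Finset.mem_filter.2 ⟨hs', h0⟩)⟩

/-- Let Σ be the generalized fan of an embedded complete simplicial fan in V
(K downward closed, generators of each face linearly independent — hence the cones are
strongly convex and simplicial —, pairwise intersections of cones are the cones of the
intersections of the faces, and the cones cover V), and let A : V → W be any linear map.
Then the pushforward A_*Σ is strongly complete. -/
theorem pushforward_of_embedded_complete_is_strongly_complete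
    {S : Type*} [Fintype S] [DecidableEq S]
    {V W : Type*} [AddCommGroup V] [Module ℝ V] [FiniteDimensional ℝ V]
    [AddCommGroup W] [Module ℝ W]
    (K : Set (Finset S)) (ρ : S → V)
    (hdown : ∀ σ ∈ K, ∀ τ, τ ⊆ σ → τ ∈ K)
    (hsimplicial : ∀ σ ∈ K, LinearIndependent ℝ (fun s : {x // x ∈ σ} => ρ s))
    (hfaces : ∀ σ ∈ K, ∀ τ ∈ K, fanCone ρ σ ∩ fanCone ρ τ = fanCone ρ (σ ∩ τ))
    (hcomplete : ∀ v : V, ∃ σ ∈ K, v ∈ fanCone ρ σ)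
    (A : V →ₗ[ℝ] W) :
    ∀ (m : Module.Dual ℝ W) (s : S), 0 < m (A (ρ s)) →
      (∀ s', 0 < m (A (ρ s')) → s' = s) →
      ∀ σ ∈ K, s ∉ σ → ∃ τ ∈ K, s ∈ τ ∧ ∀ s' ∈ σ, m (A (ρ s')) = 0 → s' ∈ τ :=
  pushforward_of_embedded_complete_is_strongly_complete_general K ρ hdown hsimplicial hfaces
    hcomplete A
end
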